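/- arXiv:2003.01354 — 3 statements merged into one kernel-verified Lean document; each statement's English description precedes it below -/
import Mathlib

section
/- For the function E : ℤ × ℤ → ℝ given by E(d₁, d₂) := π·(d₁² + d₂²), the induced quantity satisfies |(d₁, d₂)|_* = π·(|d₁| + |d₂|) for every (d₁, d₂) ∈ ℤ × ℤ. -/
open scoped BigOperators

/-- The norm `|σ|_*` induced by an energy `E : G → ℝ`: the infimum of `∑ E(σᵢ)`
over all finite decompositions `σ = ∑ σᵢ`. -/
noncomputable def starNorm {G : Type*} [AddCommGroup G] (E : G → ℝ) (σ : G) : ℝ :=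
  sInf {c : ℝ | ∃ (q : ℕ) (f : Fin q → G), (∑ i, f i) = σ ∧ (∑ i, E (f i)) = c}

lemma abs_mul_sign_sq (n : ℤ) : |n| * (Int.sign n) ^ 2 = |n| := by
  rcases lt_trichotomy n 0 with h | h | h
  · rw [Int.sign_eq_neg_one_of_neg h]; ring
  · simp [h]
  · rw [Int.sign_eq_one_of_pos h]; ring

lemma int_abs_le_sq (n : ℤ) : (|n| : ℤ) ≤ n ^ 2 := by
  rcases eq_or_ne n 0 with h | h
  · simp [h]
  · calc |n| ≤ |n| ^ 2 := le_self_pow₀ (Int.one_le_abs h) two_ne_zero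
      _ = n ^ 2 := sq_abs n

theorem stmt7 (d : ℤ × ℤ) :
    starNorm (fun σ : ℤ × ℤ => Real.pi * ((σ.1 : ℝ) ^ 2 + (σ.2 : ℝ) ^ 2)) d =
      Real.pi * ((|d.1| : ℝ) + (|d.2| : ℝ)) := by
  have hmem : Real.pi * ((|d.1| : ℝ) + (|d.2| : ℝ)) ∈
      {c : ℝ | ∃ (q : ℕ) (f : Fin q → ℤ × ℤ), (∑ i, f i) = d ∧
        (∑ i, (fun σ : ℤ × ℤ => Real.pi * ((σ.1 : ℝ) ^ 2 + (σ.2 : ℝ) ^ 2)) (f i)) = c} := by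
    refine ⟨d.1.natAbs + d.2.natAbs,
      Fin.addCases (fun _ => (Int.sign d.1, 0)) (fun _ => (0, Int.sign d.2)), ?_, ?_⟩
    · rw [Fin.sum_univ_add]
      have h1 : (d.1.natAbs : ℤ) * Int.sign d.1 = d.1 := by
        rw [mul_comm]; exact Int.sign_mul_natAbs d.1
      have h2 : (d.2.natAbs : ℤ) * Int.sign d.2 = d.2 := by
        rw [mul_comm]; exact Int.sign_mul_natAbs d.2
      simp only [Fin.addCases_left, Fin.addCases_right, Finset.sum_const,
        Finset.card_univ, Fintype.card_fin]
      rw [Prod.ext_iff]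
      constructor <;> simp only [Prod.fst_add, Prod.snd_add, Prod.smul_mk, smul_zero,
        add_zero, zero_add, nsmul_eq_mul] <;>
        [exact h1; exact h2]
    · rw [Fin.sum_univ_add]
      simp only [Fin.addCases_left, Fin.addCases_right, Finset.sum_const,
        Finset.card_univ, Fintype.card_fin, nsmul_eq_mul]
      have h1 : (|d.1| : ℝ) * ((Int.sign d.1 : ℤ) : ℝ) ^ 2 = |(d.1 : ℝ)| := by
        exact_mod_cast abs_mul_sign_sq d.1
      have h2 : (|d.2| : ℝ) * ((Int.sign d.2 : ℤ) : ℝ) ^ 2 = |(d.2 : ℝ)| := by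
        exact_mod_cast abs_mul_sign_sq d.2
      have hn1 : (d.1.natAbs : ℝ) = |(d.1 : ℝ)| := by simp [Nat.cast_natAbs]
      have hn2 : (d.2.natAbs : ℝ) = |(d.2 : ℝ)| := by simp [Nat.cast_natAbs]
      push_cast
      rw [hn1, hn2]
      linear_combination Real.pi * h1 + Real.pi * h2
  unfold starNorm
  refine le_antisymm (csInf_le ⟨0, ?_⟩ hmem) (le_csInf ⟨_, hmem⟩ ?_)
  · rintro c ⟨q, f, -, rfl⟩
    exact Finset.sum_nonneg fun i _ => mul_nonneg Real.pi_nonneg (by positivity)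
  · rintro c ⟨q, f, hsum, rfl⟩
    have hf1 : (∑ i, (f i).1) = d.1 := by rw [← Prod.fst_sum, hsum]
    have hf2 : (∑ i, (f i).2) = d.2 := by rw [← Prod.snd_sum, hsum]
    have key : (|d.1| : ℝ) + (|d.2| : ℝ) ≤ ∑ i, (((f i).1 : ℝ) ^ 2 + ((f i).2 : ℝ) ^ 2) := by
      have h1 : (|d.1| : ℤ) ≤ ∑ i, (f i).1 ^ 2 := by
        calc |d.1| = |∑ i, (f i).1| := by rw [hf1]
          _ ≤ ∑ i, |(f i).1| := Finset.abs_sum_le_sum_abs _ _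
          _ ≤ ∑ i, (f i).1 ^ 2 := Finset.sum_le_sum fun i _ => int_abs_le_sq _
      have h2 : (|d.2| : ℤ) ≤ ∑ i, (f i).2 ^ 2 := by
        calc |d.2| = |∑ i, (f i).2| := by rw [hf2]
          _ ≤ ∑ i, |(f i).2| := Finset.abs_sum_le_sum_abs _ _
          _ ≤ ∑ i, (f i).2 ^ 2 := Finset.sum_le_sum fun i _ => int_abs_le_sq _
      rw [Finset.sum_add_distrib]
      have h1' : (|d.1| : ℝ) ≤ ∑ i, ((f i).1 : ℝ) ^ 2 := by exact_mod_cast h1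
      have h2' : (|d.2| : ℝ) ≤ ∑ i, ((f i).2 : ℝ) ^ 2 := by exact_mod_cast h2
      linarith
    calc Real.pi * ((|d.1| : ℝ) + (|d.2| : ℝ))
        ≤ Real.pi * ∑ i, (((f i).1 : ℝ) ^ 2 + ((f i).2 : ℝ) ^ 2) :=
          mul_le_mul_of_nonneg_left key Real.pi_nonneg
      _ = ∑ i, Real.pi * (((f i).1 : ℝ) ^ 2 + ((f i).2 : ℝ) ^ 2) := Finset.mul_sum _ _ _
end

section
/- There exists a constant C ≥ 0, depending only on k, N, C₀ and C₁, such that for all ε > 0 and all ρ > 0 one has Λ_ε(ρ) ≥ log(ρ/ε) − C. -/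
/-- The density `λ_ε(ρ) = inf_{μ ∈ [0,1]} ( μ^k/ρ + (C₀/ε)(1-μ)^N )` from the
Jerrard-type vortex-ball construction. Exponents are real powers. -/
noncomputable def lamJ (k N C₀ ε ρ : ℝ) : ℝ :=
  ⨅ μ : Set.Icc (0 : ℝ) 1, ((μ : ℝ) ^ k / ρ + (C₀ / ε) * (1 - (μ : ℝ)) ^ N)

/-- `Λ_ε(ρ) = ∫₀^ρ min(λ_ε(s), C₁/ε) ds`. -/
noncomputable def LamJ (k N C₀ C₁ ε ρ : ℝ) : ℝ :=
  ∫ s in (0 : ℝ)..ρ, min (lamJ k N C₀ ε s) (C₁ / ε)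

open Real MeasureTheory Set intervalIntegral

lemma icc01_ne : Nonempty (Set.Icc (0:ℝ) 1) := ⟨⟨0, by norm_num⟩⟩

lemma term_nonneg {k N C₀ ε s : ℝ} (hC₀ : 0 ≤ C₀) (hε : 0 ≤ ε) (hs : 0 ≤ s)
    (μ : Set.Icc (0:ℝ) 1) :
    0 ≤ (μ : ℝ) ^ k / s + (C₀ / ε) * (1 - (μ : ℝ)) ^ N := by
  have h0 : (0:ℝ) ≤ (μ:ℝ) := μ.2.1
  have h1 : (μ:ℝ) ≤ 1 := μ.2.2
  exact add_nonneg (div_nonneg (rpow_nonneg h0 k) hs)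
    (mul_nonneg (div_nonneg hC₀ hε) (rpow_nonneg (by linarith) N))

lemma lamJ_nonneg {k N C₀ ε s : ℝ} (hC₀ : 0 ≤ C₀) (hε : 0 ≤ ε) (hs : 0 ≤ s) :
    0 ≤ lamJ k N C₀ ε s := by
  haveI := icc01_ne
  exact le_ciInf (term_nonneg hC₀ hε hs)

lemma lamJ_bdd {k N C₀ ε s : ℝ} (hC₀ : 0 ≤ C₀) (hε : 0 ≤ ε) (hs : 0 ≤ s) :
    BddBelow (Set.range fun μ : Set.Icc (0:ℝ) 1 =>
      ((μ : ℝ) ^ k / s + (C₀ / ε) * (1 - (μ : ℝ)) ^ N)) := by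
  refine ⟨0, ?_⟩
  rintro x ⟨μ, rfl⟩
  exact term_nonneg hC₀ hε hs μ

lemma lamJ_anti {k N C₀ ε : ℝ} (hC₀ : 0 ≤ C₀) (hε : 0 ≤ ε) :
    AntitoneOn (lamJ k N C₀ ε) (Set.Ioi (0:ℝ)) := by
  intro s hs s' hs' hss
  haveI := icc01_ne
  refine ciInf_mono (lamJ_bdd hC₀ hε (le_of_lt hs')) fun μ => ?_
  have h0 : (0:ℝ) ≤ (μ:ℝ) := μ.2.1
  gcongr

lemma lamJ_lb {k N C₀ ε s : ℝ} (hk : 1 ≤ k) (hN : 1 < N) (hC₀ : 0 < C₀)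
    (hε : 0 < ε) (hs : 0 < s) :
    1/s - (k/s) * ((k*ε/(C₀*s)) ^ (1/(N-1))) ≤ lamJ k N C₀ ε s := by
  haveI := icc01_ne
  refine le_ciInf fun μ => ?_
  obtain ⟨μ, hμ0, hμ1⟩ := μ
  simp only
  set T := (k*ε/(C₀*s)) ^ (1/(N-1)) with hTdef
  have hT0 : 0 ≤ T := rpow_nonneg (by positivity) _
  set t := 1 - μ with ht
  have ht0 : 0 ≤ t := by simp only [ht]; linarith
  have hks : 0 < k / s := by positivity
  have hμk : 1 - k * t ≤ μ ^ k := by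
    have h := one_add_mul_self_le_rpow_one_add (s := μ - 1) (by linarith) hk
    have e1 : 1 + (μ - 1) = μ := by ring
    have e2 : 1 + k * (μ - 1) = 1 - k * t := by simp only [ht]; ring
    rwa [e1, e2] at h
  have key : (k/s)*t - (k/s)*T ≤ (C₀/ε) * t ^ N := by
    rcases le_or_gt t T with h | h
    · have h1 : (k/s)*t ≤ (k/s)*T := mul_le_mul_of_nonneg_left h (le_of_lt hks)
      have h2 : (0:ℝ) ≤ (C₀/ε) * t ^ N :=
        mul_nonneg (by positivity) (rpow_nonneg ht0 N)
      linarith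
    · have htpos : 0 < t := lt_of_le_of_lt hT0 h
      have hTN : T ^ (N-1) = k*ε/(C₀*s) := by
        rw [hTdef, ← Real.rpow_mul (by positivity), one_div,
          inv_mul_cancel₀ (by linarith : N - 1 ≠ 0), Real.rpow_one]
      have h1 : k*ε/(C₀*s) ≤ t ^ (N-1) := by
        rw [← hTN]
        exact Real.rpow_le_rpow hT0 h.le (by linarith)
      have htN : t ^ N = t ^ (N-1) * t := by
        rw [← Real.rpow_add_one htpos.ne' (N-1)]
        congr 1
        ring
      have h2 : (k/s) * t ≤ (C₀/ε) * t ^ N := by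
        have e : (C₀/ε) * (k*ε/(C₀*s)) = k/s := by
          field_simp
        calc (k/s)*t = (C₀/ε) * (k*ε/(C₀*s)) * t := by rw [e]
          _ ≤ (C₀/ε) * t^(N-1) * t := by
              gcongr
          _ = (C₀/ε) * t^N := by rw [htN]; ring
      have h3 : 0 ≤ (k/s)*T := mul_nonneg (le_of_lt hks) hT0
      linarith
  have e3 : 1/s - (k/s)*T = (1 - k*t)/s + ((k/s)*t - (k/s)*T) := by
    field_simp
    try ring
  rw [e3]
  exact add_le_add (by gcongr) key

lemma g_nonneg {k N C₀ C₁ ε s : ℝ} (hC₀ : 0 < C₀) (hC₁ : 0 < C₁) (hε : 0 < ε)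
    (hs : 0 ≤ s) : 0 ≤ min (lamJ k N C₀ ε s) (C₁ / ε) :=
  le_min (lamJ_nonneg hC₀.le hε.le hs) (by positivity)

lemma g_integrable {k N C₀ C₁ ε : ℝ} (hC₀ : 0 < C₀) (hC₁ : 0 < C₁) (hε : 0 < ε)
    {a b : ℝ} (ha : 0 ≤ a) (hab : a ≤ b) :
    IntervalIntegrable (fun s => min (lamJ k N C₀ ε s) (C₁ / ε)) volume a b := by
  rw [intervalIntegrable_iff_integrableOn_Ioc_of_le hab]
  have hanti : AntitoneOn (fun s => min (lamJ k N C₀ ε s) (C₁ / ε)) (Set.Ioc a b) := by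
    intro x hx y hy hxy
    exact min_le_min (lamJ_anti hC₀.le hε.le (lt_of_le_of_lt ha hx.1)
      (lt_of_le_of_lt ha (lt_of_lt_of_le hx.1 hxy)) hxy) le_rfl
  have hmeas := aemeasurable_restrict_of_antitoneOn (μ := volume) measurableSet_Ioc hanti
  refine ⟨hmeas.aestronglyMeasurable, ?_⟩
  apply HasFiniteIntegral.restrict_of_bounded (C := C₁ / ε) measure_Ioc_lt_top
  refine (ae_restrict_iff' measurableSet_Ioc).2 (Filter.Eventually.of_forall fun x hx => ?_)
  rw [Real.norm_eq_abs, abs_le]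
  constructor
  · linarith [g_nonneg (k := k) (N := N) (s := x) hC₀ hC₁ hε (le_trans ha hx.1.le),
      div_pos hC₁ hε]
  · exact min_le_right _ _

theorem stmt9 (k N C₀ C₁ : ℝ) (hk : 1 ≤ k) (hN : 1 < N) (hC₀ : 0 < C₀) (hC₁ : 0 < C₁) :
    ∃ C : ℝ, 0 ≤ C ∧ ∀ ε : ℝ, 0 < ε → ∀ ρ : ℝ, 0 < ρ →
      Real.log (ρ / ε) - C ≤ LamJ k N C₀ C₁ ε ρ := by
  have hk0 : 0 < k := lt_of_lt_of_le one_pos hk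
  have hN1 : 0 < N - 1 := by linarith
  set α : ℝ := 1 / (N - 1) with hαdef
  have hα : 0 < α := by positivity
  set M : ℝ := max 1 (1 / C₁) with hMdef
  have hM1 : (1:ℝ) ≤ M := le_max_left _ _
  have hM0 : 0 < M := lt_of_lt_of_le one_pos hM1
  have hMC : 1 / M ≤ C₁ := by
    rw [div_le_iff₀ hM0]
    calc (1:ℝ) = C₁ * (1 / C₁) := by field_simp
      _ ≤ C₁ * M := by gcongr; exact le_max_right _ _
  set B : ℝ := k * (k / (C₀ * M)) ^ α / α with hBdef
  have hB : 0 ≤ B := by positivity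
  have hlogM : 0 ≤ Real.log M := Real.log_nonneg hM1
  refine ⟨Real.log M + B, by linarith, fun ε hε ρ hρ => ?_⟩
  set a : ℝ := M * ε with hadef
  have ha : 0 < a := by positivity
  rcases le_or_gt ρ a with hcase | hcase
  · -- small ρ : integral is nonneg, log(ρ/ε) ≤ log M
    have h1 : Real.log (ρ / ε) ≤ Real.log M := by
      apply Real.log_le_log (by positivity)
      rw [div_le_iff₀ hε]
      linarith
    have h2 : 0 ≤ LamJ k N C₀ C₁ ε ρ := by
      apply intervalIntegral.integral_nonneg hρ.le
      intro u hu
      exact g_nonneg hC₀ hC₁ hε hu.1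
    linarith
  · -- main case ρ > a
    set g : ℝ → ℝ := fun s => min (lamJ k N C₀ ε s) (C₁ / ε) with hgdef
    have hint1 : IntervalIntegrable g volume 0 a := g_integrable hC₀ hC₁ hε le_rfl ha.le
    have hint2 : IntervalIntegrable g volume a ρ := g_integrable hC₀ hC₁ hε ha.le hcase.le
    have hsplit : LamJ k N C₀ C₁ ε ρ = (∫ s in (0:ℝ)..a, g s) + ∫ s in a..ρ, g s :=
      (intervalIntegral.integral_add_adjacent_intervals hint1 hint2).symm
    have hI1 : 0 ≤ ∫ s in (0:ℝ)..a, g s :=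
      intervalIntegral.integral_nonneg ha.le fun u hu => g_nonneg hC₀ hC₁ hε hu.1
    set K : ℝ := k * ε / C₀ with hKdef
    have hK : 0 < K := by positivity
    set φ : ℝ → ℝ := fun u => 1/u - k * K ^ α * u ^ (-1 - α) with hφdef
    have hzero : (0:ℝ) ∉ Set.uIcc a ρ := Set.notMem_uIcc_of_lt ha hρ
    have hupos : ∀ u ∈ Set.uIcc a ρ, 0 < u := by
      rw [Set.uIcc_of_le hcase.le]
      intro u hu
      exact lt_of_lt_of_le ha hu.1
    have hφint1 : IntervalIntegrable (fun u : ℝ => 1/u) volume a ρ := by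
      apply ContinuousOn.intervalIntegrable
      exact continuousOn_const.div continuousOn_id fun u hu => (hupos u hu).ne'
    have hφint2 : IntervalIntegrable (fun u : ℝ => u ^ (-1 - α)) volume a ρ := by
      apply ContinuousOn.intervalIntegrable
      intro u hu
      exact (Real.continuousAt_rpow_const u _ (Or.inl (hupos u hu).ne')).continuousWithinAt
    have hφint : IntervalIntegrable φ volume a ρ :=
      hφint1.sub (hφint2.const_mul _)
    -- identity : (k/u) * (k*ε/(C₀*u))^α = k * K^α * u^(-1-α)
    have hid : ∀ u : ℝ, 0 < u → (k/u) * ((k*ε/(C₀*u)) ^ α) = k * K ^ α * u ^ (-1 - α) := by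
      intro u hu
      have e1 : k*ε/(C₀*u) = K / u := by
        rw [hKdef]; field_simp
      rw [e1, Real.div_rpow hK.le hu.le,
        show (-1 - α : ℝ) = (-1) + (-α) by ring, Real.rpow_add hu,
        Real.rpow_neg_one, Real.rpow_neg hu.le]
      have hua : (0:ℝ) < u ^ α := Real.rpow_pos_of_pos hu α
      field_simp
    -- pointwise comparison on [a, ρ]
    have hcomp : ∀ u ∈ Set.Icc a ρ, φ u ≤ g u := by
      intro u hu
      have hu0 : 0 < u := lt_of_lt_of_le ha hu.1
      have hnn : 0 ≤ k * K ^ α * u ^ (-1 - α) := by positivity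
      refine le_min ?_ ?_
      · have h := lamJ_lb (s := u) hk hN hC₀ hε hu0
        rw [← hαdef] at h
        calc φ u = 1/u - (k/u) * ((k*ε/(C₀*u)) ^ α) := by rw [hid u hu0]
          _ ≤ lamJ k N C₀ ε u := h
      · have h1u : 1/u ≤ C₁/ε := by
          calc 1/u ≤ 1/a := by gcongr; exact hu.1
            _ = (1/M)/ε := by rw [hadef]; field_simp
            _ ≤ C₁/ε := by gcongr
        have : φ u = 1/u - k * K ^ α * u ^ (-1 - α) := rfl
        linarith [this]
    have hI2 : (∫ u in a..ρ, φ u) ≤ ∫ u in a..ρ, g u :=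
      intervalIntegral.integral_mono_on hcase.le hφint hint2 hcomp
    -- compute the φ-integral
    have hexp : (-1 - α + 1 : ℝ) = -α := by ring
    have hne : (-1 - α : ℝ) ≠ -1 := fun h => hα.ne' (by linarith)
    have hval : (∫ u in a..ρ, φ u)
        = Real.log (ρ / a) - k * K ^ α * ((ρ ^ (-α) - a ^ (-α)) / (-α)) := by
      rw [hφdef]
      simp only
      rw [intervalIntegral.integral_sub hφint1 (hφint2.const_mul _),
        integral_one_div hzero]
      rw [intervalIntegral.integral_const_mul]
      rw [integral_rpow (Or.inr ⟨hne, hzero⟩), hexp]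
    -- bound the correction term
    have hcorr : k * K ^ α * ((ρ ^ (-α) - a ^ (-α)) / (-α)) ≤ B := by
      have hρα : 0 ≤ ρ ^ (-α) := Real.rpow_nonneg hρ.le _
      have hKα : 0 ≤ K ^ α := Real.rpow_nonneg hK.le _
      have e2 : K ^ α * a ^ (-α) = (k / (C₀ * M)) ^ α := by
        rw [Real.rpow_neg ha.le, ← div_eq_mul_inv, ← Real.div_rpow hK.le ha.le]
        congr 1
        rw [hKdef, hadef]
        field_simp
      have e4 : k * K ^ α * ((ρ ^ (-α) - a ^ (-α)) / (-α))
          = (k * (K ^ α * a ^ (-α)) - k * (K ^ α * ρ ^ (-α))) / α := by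
        ring
      rw [e4, hBdef]
      gcongr
      have h5 : 0 ≤ k * (K ^ α * ρ ^ (-α)) := by positivity
      calc k * (K ^ α * a ^ (-α)) - k * (K ^ α * ρ ^ (-α)) ≤ k * (K ^ α * a ^ (-α)) := by linarith
        _ = k * (k / (C₀ * M)) ^ α := by rw [e2]
    -- log identity
    have hlog : Real.log (ρ / a) = Real.log (ρ / ε) - Real.log M := by
      rw [Real.log_div hρ.ne' ha.ne', Real.log_div hρ.ne' hε.ne', hadef,
        Real.log_mul hM0.ne' hε.ne']
      ring
    rw [hsplit]
    have h6 := hval ▸ hI2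
    linarith
end

section
/- There exists a Lipschitz map u : K × \bar B^d(0,1) → ℝ^m taking its values in N such that u(x′, x″) = h(x′) whenever |x″| = 1 and u(x′, x″) = φ(4x″) whenever |x″| ≤ 1/4. -/
open scoped NNReal

noncomputable def cl (t : ℝ) : ℝ := min 1 (max t 0)

lemma cl_nonneg (t : ℝ) : 0 ≤ cl t := le_min zero_le_one (le_max_right _ _)
lemma cl_le_one (t : ℝ) : cl t ≤ 1 := min_le_left _ _
lemma cl_of_nonpos {t : ℝ} (ht : t ≤ 0) : cl t = 0 := by
  simp [cl, max_eq_right ht]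
lemma cl_of_one_le {t : ℝ} (ht : 1 ≤ t) : cl t = 1 := by
  have : max t 0 = t := max_eq_left (by linarith)
  simp [cl, this, min_eq_left ht]
lemma cl_of_mem {t : ℝ} (h0 : 0 ≤ t) (h1 : t ≤ 1) : cl t = t := by
  simp [cl, max_eq_left h0, min_eq_right h1]
lemma cl_lip (s t : ℝ) : |cl s - cl t| ≤ |s - t| := by
  have h1 := abs_max_sub_max_le_abs s t 0
  have h2 : |min 1 (max s 0) - min 1 (max t 0)| ≤ |max s 0 - max t 0| := by
    rw [min_comm 1 _, min_comm 1 _]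
    exact abs_min_sub_min_le_max (max s 0) 1 (max t 0) 1 |>.trans (by simp [abs_nonneg])
  exact h2.trans h1

variable {E : Type*} [NormedAddCommGroup E] [NormedSpace ℝ E]

noncomputable def pb (y : E) : E := (max 1 ‖y‖)⁻¹ • y

lemma pb_eq {y : E} (hy : ‖y‖ ≤ 1) : pb y = y := by
  simp [pb, max_eq_left hy]
lemma pb_norm_le (y : E) : ‖pb y‖ ≤ 1 := by
  have h1 : (0:ℝ) < max 1 ‖y‖ := lt_of_lt_of_le one_pos (le_max_left _ _)
  rw [pb, norm_smul, norm_inv, Real.norm_eq_abs, abs_of_pos h1, inv_mul_le_iff₀ h1, mul_one]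
  exact le_max_right _ _
lemma pb_norm_eq {y : E} (hy : 1 ≤ ‖y‖) : ‖pb y‖ = 1 := by
  have h0 : ‖y‖ ≠ 0 := by positivity
  rw [pb, max_eq_right hy, norm_smul, norm_inv, Real.norm_eq_abs, abs_of_nonneg (norm_nonneg y),
    inv_mul_cancel₀ h0]
lemma pb_lip (y z : E) : dist (pb y) (pb z) ≤ 2 * dist y z := by
  set my := max 1 ‖y‖ with hmy
  set mz := max 1 ‖z‖ with hmz
  have hmy1 : (1:ℝ) ≤ my := le_max_left _ _
  have hmz1 : (1:ℝ) ≤ mz := le_max_left _ _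
  have hmy0 : (0:ℝ) < my := lt_of_lt_of_le one_pos hmy1
  have hmz0 : (0:ℝ) < mz := lt_of_lt_of_le one_pos hmz1
  have hdm : |my - mz| ≤ ‖y - z‖ := by
    have := abs_max_sub_max_le_abs ‖y‖ ‖z‖ 1
    rw [max_comm ‖y‖ 1, max_comm ‖z‖ 1] at this
    exact this.trans (abs_norm_sub_norm_le _ _)
  have key : pb y - pb z = my⁻¹ • (y - z) + (my⁻¹ - mz⁻¹) • z := by
    simp [pb, smul_sub, sub_smul]
    rfl
  rw [dist_eq_norm, key]
  have h1 : ‖my⁻¹ • (y - z)‖ ≤ ‖y - z‖ := by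
    rw [norm_smul, norm_inv, Real.norm_eq_abs, abs_of_pos hmy0]
    calc my⁻¹ * ‖y - z‖ ≤ 1 * ‖y - z‖ := by
          apply mul_le_mul_of_nonneg_right _ (norm_nonneg _)
          rw [inv_le_one_iff₀]; right; exact hmy1
      _ = ‖y - z‖ := one_mul _
  have h2 : ‖(my⁻¹ - mz⁻¹) • z‖ ≤ ‖y - z‖ := by
    rw [norm_smul, Real.norm_eq_abs]
    have hz : ‖z‖ ≤ mz := le_max_right _ _
    have : |my⁻¹ - mz⁻¹| = |mz - my| / (my * mz) := by
      rw [inv_sub_inv hmy0.ne' hmz0.ne', abs_div, abs_of_pos (mul_pos hmy0 hmz0)]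
    rw [this]
    have habs : |mz - my| ≤ ‖y - z‖ := by rw [abs_sub_comm]; exact hdm
    calc |mz - my| / (my * mz) * ‖z‖ ≤ ‖y - z‖ / (my * mz) * mz := by
          gcongr
      _ = ‖y - z‖ * (mz / (my * mz)) := by ring
      _ ≤ ‖y - z‖ * 1 := by
          apply mul_le_mul_of_nonneg_left _ (norm_nonneg _)
          rw [div_le_one (mul_pos hmy0 hmz0)]
          nlinarith
      _ = ‖y - z‖ := mul_one _
  calc ‖my⁻¹ • (y - z) + (my⁻¹ - mz⁻¹) • z‖ ≤ ‖my⁻¹ • (y - z)‖ + ‖(my⁻¹ - mz⁻¹) • z‖ :=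
        norm_add_le _ _
    _ ≤ ‖y - z‖ + ‖y - z‖ := add_le_add h1 h2
    _ = 2 * dist y z := by rw [dist_eq_norm]; ring

lemma lipOn_add {α : Type*} [PseudoMetricSpace α] {f g : α → E} {Cf Cg : ℝ≥0} {s : Set α}
    (hf : LipschitzOnWith Cf f s) (hg : LipschitzOnWith Cg g s) :
    LipschitzOnWith (Cf + Cg) (fun x => f x + g x) s := by
  apply LipschitzOnWith.of_dist_le_mul
  intro x hx y hy
  calc dist (f x + g x) (f y + g y) ≤ dist (f x) (f y) + dist (g x) (g y) := dist_add_add_le _ _ _ _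
    _ ≤ Cf * dist x y + Cg * dist x y := add_le_add (hf.dist_le_mul x hx y hy) (hg.dist_le_mul x hx y hy)
    _ = (Cf + Cg) * dist x y := by push_cast; ring

lemma lipOn_sub_const {α : Type*} [PseudoMetricSpace α] {f : α → E} {Cf : ℝ≥0} {s : Set α}
    (hf : LipschitzOnWith Cf f s) (c : E) : LipschitzOnWith Cf (fun x => f x - c) s := by
  intro x hx y hy
  simpa [edist_sub_right] using hf hx hy
theorem stmt10 (j d m : ℕ) (hj : 1 ≤ j) (hd : 1 ≤ d) (hm : 1 ≤ m)
    (N : Set (EuclideanSpace ℝ (Fin m))) (hN : N.Nonempty)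
    (K : Set (EuclideanSpace ℝ (Fin j))) (hKne : K.Nonempty)
    (hKcp : IsCompact K) (hKconv : Convex ℝ K)
    (x₀ : EuclideanSpace ℝ (Fin j)) (hx₀ : x₀ ∈ K)
    (h : EuclideanSpace ℝ (Fin j) → EuclideanSpace ℝ (Fin m))
    (Ch : ℝ≥0) (hLip : LipschitzOnWith Ch h K) (hhN : ∀ x ∈ K, h x ∈ N)
    (z₀ : EuclideanSpace ℝ (Fin m)) (hz₀ : z₀ ∈ N)
    (φ : EuclideanSpace ℝ (Fin d) → EuclideanSpace ℝ (Fin m)) (Cφ : ℝ≥0)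
    (hφLip : LipschitzOnWith Cφ φ (Metric.closedBall 0 1))
    (hφN : ∀ x ∈ Metric.closedBall (0 : EuclideanSpace ℝ (Fin d)) 1, φ x ∈ N)
    (hφbd : ∀ x'' : EuclideanSpace ℝ (Fin d), ‖x''‖ = 1 → φ x'' = z₀)
    (ζ : ℝ → EuclideanSpace ℝ (Fin m)) (Cζ : ℝ≥0)
    (hζLip : LipschitzOnWith Cζ ζ (Set.Icc 0 1))
    (hζN : ∀ t ∈ Set.Icc (0 : ℝ) 1, ζ t ∈ N)
    (hζ0 : ζ 0 = z₀) (hζ1 : ζ 1 = h x₀) :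
    ∃ (u : EuclideanSpace ℝ (Fin j) × EuclideanSpace ℝ (Fin d) → EuclideanSpace ℝ (Fin m))
      (Cu : ℝ≥0),
      LipschitzOnWith Cu u (K ×ˢ Metric.closedBall 0 1) ∧
      (∀ q ∈ K ×ˢ Metric.closedBall (0 : EuclideanSpace ℝ (Fin d)) 1, u q ∈ N) ∧
      (∀ x' ∈ K, ∀ x'' : EuclideanSpace ℝ (Fin d), ‖x''‖ = 1 → u (x', x'') = h x') ∧
      (∀ x' ∈ K, ∀ x'' : EuclideanSpace ℝ (Fin d), ‖x''‖ ≤ 1 / 4 →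
        u (x', x'') = φ ((4 : ℝ) • x'')) := by
  classical
  obtain ⟨R, hRsub⟩ := hKcp.isBounded.subset_closedBall x₀
  have hR0 : 0 ≤ R := by
    have := hRsub hx₀
    rw [Metric.mem_closedBall, dist_self] at this
    exact this
  have hKR : ∀ x ∈ K, ‖x - x₀‖ ≤ R := by
    intro x hx
    have := hRsub hx
    rwa [Metric.mem_closedBall, dist_eq_norm] at this
  set S := K ×ˢ Metric.closedBall (0 : EuclideanSpace ℝ (Fin d)) 1 with hS
  set ψ : EuclideanSpace ℝ (Fin j) × EuclideanSpace ℝ (Fin d) → EuclideanSpace ℝ (Fin j) :=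
    fun p => x₀ + cl (2 * ‖p.2‖ - 1) • (p.1 - x₀) with hψdef
  set u : EuclideanSpace ℝ (Fin j) × EuclideanSpace ℝ (Fin d) → EuclideanSpace ℝ (Fin m) :=
    fun p => φ (pb ((4:ℝ) • p.2)) + ((ζ (cl (4 * ‖p.2‖ - 1)) - z₀) + (h (ψ p) - h x₀))
    with hudef
  -- basic facts
  have hdfst : ∀ p q : EuclideanSpace ℝ (Fin j) × EuclideanSpace ℝ (Fin d),
      dist p.1 q.1 ≤ dist p q := fun p q => by
    rw [Prod.dist_eq]; exact le_max_left _ _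
  have hdsnd : ∀ p q : EuclideanSpace ℝ (Fin j) × EuclideanSpace ℝ (Fin d),
      dist p.2 q.2 ≤ dist p q := fun p q => by
    rw [Prod.dist_eq]; exact le_max_right _ _
  -- first piece
  have hg1 : LipschitzOnWith 8 (fun p : EuclideanSpace ℝ (Fin j) × EuclideanSpace ℝ (Fin d) =>
      pb ((4:ℝ) • p.2)) S := by
    apply LipschitzOnWith.of_dist_le_mul
    intro p hp q hq
    calc dist (pb ((4:ℝ) • p.2)) (pb ((4:ℝ) • q.2)) ≤ 2 * dist ((4:ℝ) • p.2) ((4:ℝ) • q.2) :=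
          pb_lip _ _
      _ = 8 * dist p.2 q.2 := by
          rw [dist_eq_norm, ← smul_sub, norm_smul, Real.norm_eq_abs, dist_eq_norm]
          norm_num; ring
      _ ≤ (8:ℝ≥0) * dist p q := by
          have := hdsnd p q
          push_cast
          nlinarith [dist_nonneg (x := p.2) (y := q.2)]
  have hmaps1 : Set.MapsTo (fun p : EuclideanSpace ℝ (Fin j) × EuclideanSpace ℝ (Fin d) =>
      pb ((4:ℝ) • p.2)) S (Metric.closedBall 0 1) := by
    intro p _
    rw [Metric.mem_closedBall, dist_zero_right]
    exact pb_norm_le _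
  have hT1 : LipschitzOnWith (Cφ * 8)
      (fun p : EuclideanSpace ℝ (Fin j) × EuclideanSpace ℝ (Fin d) =>
        φ (pb ((4:ℝ) • p.2))) S := hφLip.comp hg1 hmaps1
  -- second piece
  have hg2 : LipschitzOnWith 4 (fun p : EuclideanSpace ℝ (Fin j) × EuclideanSpace ℝ (Fin d) =>
      cl (4 * ‖p.2‖ - 1)) S := by
    apply LipschitzOnWith.of_dist_le_mul
    intro p hp q hq
    rw [Real.dist_eq]
    calc |cl (4 * ‖p.2‖ - 1) - cl (4 * ‖q.2‖ - 1)| ≤ |(4 * ‖p.2‖ - 1) - (4 * ‖q.2‖ - 1)| :=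
          cl_lip _ _
      _ = 4 * |‖p.2‖ - ‖q.2‖| := by rw [show (4 * ‖p.2‖ - 1) - (4 * ‖q.2‖ - 1) = 4*(‖p.2‖ - ‖q.2‖) by ring, abs_mul]; norm_num
      _ ≤ 4 * ‖p.2 - q.2‖ := by
          have := abs_norm_sub_norm_le p.2 q.2
          linarith
      _ ≤ (4:ℝ≥0) * dist p q := by
          have h1 := hdsnd p q
          rw [dist_eq_norm] at h1
          push_cast
          linarith
  have hmaps2 : Set.MapsTo (fun p : EuclideanSpace ℝ (Fin j) × EuclideanSpace ℝ (Fin d) =>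
      cl (4 * ‖p.2‖ - 1)) S (Set.Icc 0 1) :=
    fun p _ => ⟨cl_nonneg _, cl_le_one _⟩
  have hT2 : LipschitzOnWith (Cζ * 4)
      (fun p : EuclideanSpace ℝ (Fin j) × EuclideanSpace ℝ (Fin d) =>
        ζ (cl (4 * ‖p.2‖ - 1)) - z₀) S :=
    lipOn_sub_const (hζLip.comp hg2 hmaps2) z₀
  -- third piece
  set R' : ℝ≥0 := ⟨R, hR0⟩ with hR'
  have hg3 : LipschitzOnWith (1 + 2 * R') ψ S := by
    apply LipschitzOnWith.of_dist_le_mul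
    intro p hp q hq
    have hq1K : q.1 ∈ K := hq.1
    set cp := cl (2 * ‖p.2‖ - 1)
    set cq := cl (2 * ‖q.2‖ - 1)
    have hcp0 : 0 ≤ cp := cl_nonneg _
    have hcp1 : cp ≤ 1 := cl_le_one _
    have hcd : |cp - cq| ≤ 2 * ‖p.2 - q.2‖ := by
      calc |cp - cq| ≤ |(2 * ‖p.2‖ - 1) - (2 * ‖q.2‖ - 1)| := cl_lip _ _
        _ = 2 * |‖p.2‖ - ‖q.2‖| := by
            rw [show (2 * ‖p.2‖ - 1) - (2 * ‖q.2‖ - 1) = 2*(‖p.2‖ - ‖q.2‖) by ring, abs_mul]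
            norm_num
        _ ≤ 2 * ‖p.2 - q.2‖ := by
            have := abs_norm_sub_norm_le p.2 q.2
            linarith
    have key : ψ p - ψ q = cp • (p.1 - q.1) + (cp - cq) • (q.1 - x₀) := by
      show x₀ + cp • (p.1 - x₀) - (x₀ + cq • (q.1 - x₀)) = cp • (p.1 - q.1) + (cp - cq) • (q.1 - x₀)
      module
    rw [dist_eq_norm, key]
    have hbq : ‖q.1 - x₀‖ ≤ R := hKR _ hq1K
    have h1 : ‖cp • (p.1 - q.1)‖ ≤ dist p q := by
      rw [norm_smul, Real.norm_eq_abs, abs_of_nonneg hcp0]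
      have hf := hdfst p q
      rw [dist_eq_norm] at hf
      have hd0 : (0:ℝ) ≤ dist p q := dist_nonneg
      calc cp * ‖p.1 - q.1‖ ≤ 1 * dist p q :=
            mul_le_mul hcp1 hf (norm_nonneg _) zero_le_one
        _ = dist p q := one_mul _
    have h2 : ‖(cp - cq) • (q.1 - x₀)‖ ≤ 2 * R * dist p q := by
      rw [norm_smul, Real.norm_eq_abs]
      have hs := hdsnd p q
      rw [dist_eq_norm] at hs
      calc |cp - cq| * ‖q.1 - x₀‖ ≤ (2 * dist p q) * R := by
            apply mul_le_mul _ hbq (norm_nonneg _) (by positivity)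
            calc |cp - cq| ≤ 2 * ‖p.2 - q.2‖ := hcd
              _ ≤ 2 * dist p q := by linarith
        _ = 2 * R * dist p q := by ring
    calc ‖cp • (p.1 - q.1) + (cp - cq) • (q.1 - x₀)‖
        ≤ ‖cp • (p.1 - q.1)‖ + ‖(cp - cq) • (q.1 - x₀)‖ := norm_add_le _ _
      _ ≤ dist p q + 2 * R * dist p q := add_le_add h1 h2
      _ = ((1 + 2 * R' : ℝ≥0) : ℝ) * dist p q := by
          have hRR : (R' : ℝ) = R := rfl
          push_cast [hRR]
          ring
  have hmaps3 : Set.MapsTo ψ S K := by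
    intro p hp
    have hc0 : (0:ℝ) ≤ cl (2 * ‖p.2‖ - 1) := cl_nonneg _
    have hc1 : cl (2 * ‖p.2‖ - 1) ≤ 1 := cl_le_one _
    have := hKconv hx₀ hp.1 (by linarith : (0:ℝ) ≤ 1 - cl (2 * ‖p.2‖ - 1)) hc0 (by ring)
    convert this using 1
    simp only [hψdef]
    module
  have hT3 : LipschitzOnWith (Ch * (1 + 2 * R'))
      (fun p : EuclideanSpace ℝ (Fin j) × EuclideanSpace ℝ (Fin d) => h (ψ p) - h x₀) S :=
    lipOn_sub_const (hLip.comp hg3 hmaps3) (h x₀)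
  have hulip : LipschitzOnWith (Cφ * 8 + (Cζ * 4 + Ch * (1 + 2 * R'))) u S := by
    exact lipOn_add hT1 (lipOn_add hT2 hT3)
  -- value analysis
  have hval : ∀ p : EuclideanSpace ℝ (Fin j) × EuclideanSpace ℝ (Fin d), p ∈ S →
      (‖p.2‖ ≤ 1/4 → u p = φ ((4:ℝ) • p.2)) ∧
      (1/4 ≤ ‖p.2‖ → ‖p.2‖ ≤ 1/2 → u p = ζ (4 * ‖p.2‖ - 1)) ∧
      (1/2 ≤ ‖p.2‖ → u p = h (ψ p)) := by
    intro p hp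
    refine ⟨?_, ?_, ?_⟩
    · intro hr
      have h1 : pb ((4:ℝ) • p.2) = (4:ℝ) • p.2 := by
        apply pb_eq
        rw [norm_smul, Real.norm_eq_abs]
        norm_num
        linarith
      have h2 : cl (4 * ‖p.2‖ - 1) = 0 := cl_of_nonpos (by linarith)
      have h3 : cl (2 * ‖p.2‖ - 1) = 0 := cl_of_nonpos (by nlinarith [norm_nonneg p.2])
      simp only [hudef, hψdef, h1, h2, h3, hζ0, zero_smul, add_zero, sub_self]
    · intro hr1 hr2
      have hn : (1:ℝ) ≤ ‖(4:ℝ) • p.2‖ := by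
        rw [norm_smul, Real.norm_eq_abs]
        norm_num
        linarith
      have h1 : φ (pb ((4:ℝ) • p.2)) = z₀ := hφbd _ (pb_norm_eq hn)
      have h2 : cl (4 * ‖p.2‖ - 1) = 4 * ‖p.2‖ - 1 := cl_of_mem (by linarith) (by linarith)
      have h3 : cl (2 * ‖p.2‖ - 1) = 0 := cl_of_nonpos (by linarith)
      simp only [hudef, hψdef, h1, h2, h3, zero_smul, add_zero, sub_self]
      abel
    · intro hr
      have hn : (1:ℝ) ≤ ‖(4:ℝ) • p.2‖ := by
        rw [norm_smul, Real.norm_eq_abs]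
        norm_num
        linarith
      have h1 : φ (pb ((4:ℝ) • p.2)) = z₀ := hφbd _ (pb_norm_eq hn)
      have h2 : cl (4 * ‖p.2‖ - 1) = 1 := cl_of_one_le (by linarith)
      simp only [hudef, h1, h2, hζ1]
      abel
  refine ⟨u, Cφ * 8 + (Cζ * 4 + Ch * (1 + 2 * R')), hulip, ?_, ?_, ?_⟩
  · intro q hq
    obtain ⟨hv1, hv2, hv3⟩ := hval q hq
    rcases le_or_gt ‖q.2‖ (1/4) with hr | hr
    · rw [hv1 hr]
      apply hφN
      rw [Metric.mem_closedBall, dist_zero_right, norm_smul, Real.norm_eq_abs]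
      norm_num
      linarith
    · rcases le_or_gt ‖q.2‖ (1/2) with hr2 | hr2
      · rw [hv2 hr.le hr2]
        exact hζN _ ⟨by linarith, by linarith⟩
      · rw [hv3 hr2.le]
        exact hhN _ (hmaps3 hq)
  · intro x' hx' x'' hx''
    have hq : (x', x'') ∈ S := ⟨hx', by
      rw [Metric.mem_closedBall, dist_zero_right, hx'']⟩
    obtain ⟨_, _, hv3⟩ := hval (x', x'') hq
    rw [hv3 (by rw [hx'']; norm_num)]
    simp only [hψdef]
    have : cl (2 * ‖x''‖ - 1) = 1 := by rw [hx'']; exact cl_of_one_le (by norm_num)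
    rw [this, one_smul]
    show h (x₀ + (x' - x₀)) = h x'
    rw [add_sub_cancel]
  · intro x' hx' x'' hx''
    have hq : (x', x'') ∈ S := ⟨hx', by
      rw [Metric.mem_closedBall, dist_zero_right]; linarith⟩
    obtain ⟨hv1, _, _⟩ := hval (x', x'') hq
    exact hv1 hx''
end
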